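/- arXiv:1307.1627 — 3 statements merged into one kernel-verified Lean document; each statement's English description precedes it below -/
import Mathlib

section
/- Let G ∈ ℂ[[x]] with v(G) = 1 and leading coefficient 1, and fix q ∈ ℚ_{>0} and c ∈ ℂ \ {0}. Then there exists exactly one Puiseux series h ∈ K̂ with initial term c·x^q satisfying the functional-differential equation q · (G ∘ h) = h' · G. -/
open HahnSeries

noncomputable section

abbrev Khat := HahnSeries ℚ ℂ

/-- A Hahn series is a Puiseux series if its support lies in `(1/d)ℤ` for some `d ≥ 1`. -/
def IsPuiseux (f : Khat) : Prop :=
  ∃ d : ℕ, 0 < d ∧ ∀ q ∈ f.support, ∃ n : ℤ, q = (n : ℚ) / d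

/-- Formal derivative of a Hahn/Puiseux series. -/
def D (f : Khat) : Khat where
  coeff q := ((q + 1 : ℚ) : ℂ) * f.coeff (q + 1)
  isPWO_support' := by
    have hsub : (Function.support fun q : ℚ => ((q + 1 : ℚ) : ℂ) * f.coeff (q + 1)) ⊆
        (fun q : ℚ => q - 1) '' f.support := by
      intro q hq
      have : f.coeff (q + 1) ≠ 0 := by
        intro h0
        apply hq
        simp [h0]
      exact ⟨q + 1, this, by ring⟩
    exact (Set.IsPWO.image_of_monotone f.isPWO_support
      (fun a b hab => by simpa using sub_le_sub_right hab 1)).mono hsub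

/-- Formal integral of a Hahn/Puiseux series (dropping any `x⁻¹` term). -/
def integ (f : Khat) : Khat where
  coeff q := if q = 0 then 0 else f.coeff (q - 1) / ((q : ℚ) : ℂ)
  isPWO_support' := by
    have hsub : (Function.support fun q : ℚ => if q = 0 then 0 else f.coeff (q - 1) / ((q : ℚ) : ℂ)) ⊆
        (fun q : ℚ => q + 1) '' f.support := by
      intro q hq
      simp only [Function.mem_support] at hq
      by_cases h0 : q = 0
      · simp [h0] at hq
      · have : f.coeff (q - 1) ≠ 0 := by
          intro h; simp [h0, h] at hq
        exact ⟨q - 1, this, by ring⟩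
    exact (Set.IsPWO.image_of_monotone f.isPWO_support
      (fun a b hab => by simpa using add_le_add_right hab 1)).mono hsub

/-- Composition `F ∘ h` of a power series `F` with a Hahn series `h` of positive order. -/
def hcomp (F : PowerSeries ℂ) (h : Khat) : Khat :=
  if hh : 0 < h.orderTop then
    HahnSeries.SummableFamily.hsum
      { toFun := fun n => (PowerSeries.coeff n F) • h ^ n
        isPWO_iUnion_support' := by
          refine ((HahnSeries.SummableFamily.powers h).isPWO_iUnion_support).mono ?_
          refine Set.iUnion_mono fun n => ?_
          intro q hq
          simp only [HahnSeries.mem_support, HahnSeries.coeff_smul] at hq ⊢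
          intro h0
          simp only [HahnSeries.SummableFamily.powers_toFun, hh, if_true] at h0
          exact hq (by rw [h0, smul_zero])
        finite_co_support' := fun g => by
          refine ((HahnSeries.SummableFamily.powers h).finite_co_support g).subset ?_
          intro n hn
          simp only [Set.mem_setOf_eq, HahnSeries.coeff_smul, ne_eq] at hn ⊢
          intro h0
          simp only [HahnSeries.SummableFamily.powers_toFun, hh, if_true] at h0
          exact hn (by rw [h0, smul_zero]) }
  else 0

/-- The embedding of power series into Hahn series over `ℚ`. -/
def ofPS : PowerSeries ℂ →+* Khat := HahnSeries.ofPowerSeries ℚ ℂ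

/-- Logarithmic derivative. -/
def ld (u : Khat) : Khat := D u / u

end

/-!
Write `defect G q h = q • (G ∘ h) - h' * G`. If `h₁` and `h₂` have order at least `q > 0` and
agree below `s`, then in `defect G q h₁ - defect G q h₂` the coefficient of `x^s` is
`(q - s) * G₁ * (h₁ - h₂)ₛ`: in `G ∘ h` only the linear term of `G` reaches `x^s`, since
`h₁ⁿ - h₂ⁿ` has order at least `s + (n - 1) q > s` for `n ≥ 2`, and in `h' * G` only the
term `x` of `G` does.
Uniqueness follows by looking at the first exponent `s > q` where two solutions differ.
For existence, let `d` be the denominator of `q`: the coefficients at `q + k / d` are solved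
for one after the other, the coefficient at `q` being the free parameter `c`. Every series
involved is supported in `(1/d) ℤ`, so the defect of the resulting series vanishes
off the exponents `q + k / d` as well.
-/

namespace HahnSeries

variable {Γ R : Type*} [AddCommMonoid Γ] [LinearOrder Γ] [IsOrderedCancelAddMonoid Γ]

theorem coeff_mul_of_le_orderTop [NonUnitalNonAssocSemiring R] {x y : HahnSeries Γ R} {a b : Γ}
    (hx : a ≤ x.orderTop) (hy : b ≤ y.orderTop) :
    (x * y).coeff (a + b) = x.coeff a * y.coeff b := by
  rw [coeff_mul, Finset.sum_eq_single (a, b)]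
  · rintro ⟨i, j⟩ hij hne
    obtain ⟨hi, hj, hij⟩ := Finset.mem_antidiagonal.mp hij
    have hai : a ≤ i := not_lt.mp fun h =>
      hi (coeff_eq_zero_of_lt_orderTop ((WithTop.coe_lt_coe.mpr h).trans_le hx))
    have hbj : b ≤ j := not_lt.mp fun h =>
      hj (coeff_eq_zero_of_lt_orderTop ((WithTop.coe_lt_coe.mpr h).trans_le hy))
    obtain rfl : a = i := hai.eq_of_not_lt fun h => (add_lt_add_of_lt_of_le h hbj).ne' hij
    obtain rfl : b = j := hbj.eq_of_not_lt fun h => (add_lt_add_of_le_of_lt hai h).ne' hij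
    exact absurd rfl hne
  · intro hab
    by_contra hne
    exact hab (Finset.mem_antidiagonal.mpr
      ⟨left_ne_zero_of_mul hne, right_ne_zero_of_mul hne, rfl⟩)

variable [CommRing R]

theorem orderTop_sub_add_nsmul_le_orderTop_pow_sub_pow {x y : HahnSeries Γ R} {a : WithTop Γ}
    (hx : a ≤ x.orderTop) (hy : a ≤ y.orderTop) (n : ℕ) :
    (x - y).orderTop + n • a ≤ (x ^ (n + 1) - y ^ (n + 1)).orderTop := by
  induction n with
  | zero => simp
  | succ n ih =>
    have hsplit : x ^ (n + 2) - y ^ (n + 2) =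
        x ^ (n + 1) * (x - y) + (x ^ (n + 1) - y ^ (n + 1)) * y := by
      ring
    rw [hsplit]
    refine le_trans (le_min ?_ ?_) min_orderTop_le_orderTop_add
    · calc (x - y).orderTop + (n + 1) • a = (n + 1) • a + (x - y).orderTop := add_comm _ _
        _ ≤ (x ^ (n + 1)).orderTop + (x - y).orderTop := by
          gcongr
          exact (nsmul_le_nsmul_right hx _).trans orderTop_nsmul_le_orderTop_pow
        _ ≤ _ := orderTop_add_le_mul
    · calc (x - y).orderTop + (n + 1) • a = ((x - y).orderTop + n • a) + a := by
            rw [succ_nsmul, add_assoc]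
        _ ≤ (x ^ (n + 1) - y ^ (n + 1)).orderTop + y.orderTop := add_le_add ih hy
        _ ≤ _ := orderTop_add_le_mul

variable (R) in
def supportedIn (S : AddSubmonoid Γ) : Subring (HahnSeries Γ R) where
  carrier := {x | x.support ⊆ S}
  mul_mem' {x y} hx hy := support_mul_subset.trans
    (Set.add_subset_iff.mpr fun _ hi _ hj => S.add_mem (hx hi) (hy hj))
  add_mem' {x y} hx hy := (support_add_subset x y).trans (Set.union_subset hx hy)
  neg_mem' {x} hx := support_neg.trans_subset hx
  zero_mem' := by simp
  one_mem' := support_single_subset.trans (Set.singleton_subset_iff.mpr S.zero_mem)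

end HahnSeries

namespace PowerSeries

open HahnSeries

variable {Γ R : Type*} [AddCommMonoid Γ] [LinearOrder Γ] [IsOrderedCancelAddMonoid Γ]
  [CommRing R]

theorem coeff_heval_sub_heval {x y : HahnSeries Γ R} {a : Γ} (ha : 0 < a)
    (hx : a ≤ x.orderTop) (hy : a ≤ y.orderTop) (F : PowerSeries R) {g : Γ}
    (hg : g ≤ (x - y).orderTop) :
    (heval x F - heval y F).coeff g = PowerSeries.coeff 1 F * (x - y).coeff g := by
  have hx0 : 0 < x.orderTop := (WithTop.coe_lt_coe.mpr ha).trans_le hx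
  have hy0 : 0 < y.orderTop := (WithTop.coe_lt_coe.mpr ha).trans_le hy
  rw [heval_apply, heval_apply, ← SummableFamily.hsum_sub,
    SummableFamily.coeff_hsum, finsum_eq_single _ 1]
  · simp [hx0, hy0, mul_sub]
  · intro n hn
    simp only [SummableFamily.sub_apply, SummableFamily.powerSeriesFamily_of_orderTop_pos hx0,
      SummableFamily.powerSeriesFamily_of_orderTop_pos hy0, ← smul_sub, HahnSeries.coeff_smul]
    obtain _ | _ | m := n
    · simp
    · exact absurd rfl hn
    · refine smul_eq_zero_of_right _ (coeff_eq_zero_of_lt_orderTop ?_)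
      calc (g : WithTop Γ) < g + (m + 1) • a := by
            exact_mod_cast lt_add_of_pos_right g (nsmul_pos ha m.succ_ne_zero)
        _ ≤ (x - y).orderTop + (m + 1) • (a : WithTop Γ) := by
            gcongr
        _ ≤ _ := orderTop_sub_add_nsmul_le_orderTop_pow_sub_pow hx hy _

theorem heval_mem_supportedIn {S : AddSubmonoid Γ} {x : HahnSeries Γ R}
    (hx : x ∈ supportedIn R S) (F : PowerSeries R) : heval x F ∈ supportedIn R S := by
  intro g hg
  by_contra hgS
  refine hg ?_
  rw [coeff_heval]
  refine finsum_eq_zero_of_forall_eq_zero fun n => ?_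
  simp only [SummableFamily.coeff_apply, SummableFamily.smulFamily_toFun, HahnSeries.coeff_smul]
  have hpow : SummableFamily.powers x n ∈ supportedIn R S :=
    Subring.pow_mem _ (by split_ifs; exacts [hx, Subring.zero_mem _]) n
  exact smul_eq_zero_of_right _ (by_contra fun hne => hgS (hpow hne))

end PowerSeries

theorem hcomp_eq_heval (F : PowerSeries ℂ) {h : Khat} (hh : 0 < h.orderTop) :
    hcomp F h = PowerSeries.heval h F := by
  ext g
  rw [hcomp, dif_pos hh, SummableFamily.coeff_hsum, PowerSeries.coeff_heval]
  simp [hh]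

theorem hcomp_zero {F : PowerSeries ℂ} (hF0 : PowerSeries.coeff 0 F = 0) : hcomp F 0 = 0 := by
  rw [hcomp_eq_heval F (by simp), PowerSeries.heval_apply,
    SummableFamily.powerSeriesFamily_hsum_zero, ← PowerSeries.coeff_zero_eq_constantCoeff_apply,
    hF0, zero_smul]

theorem coeff_D (f : Khat) (s : ℚ) : (D f).coeff s = ((s + 1 : ℚ) : ℂ) * f.coeff (s + 1) := rfl

theorem D_sub (f g : Khat) : D (f - g) = D f - D g := by
  ext s
  simp only [coeff_D, coeff_sub, mul_sub]

theorem D_zero : D 0 = 0 := by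
  simpa using D_sub 0 0

theorem le_orderTop_D {f : Khat} {s : ℚ} (hf : s ≤ f.orderTop) :
    ((s - 1 : ℚ) : WithTop ℚ) ≤ (D f).orderTop := by
  rw [le_orderTop_iff_forall] at hf ⊢
  intro t ht
  have ht' : t + 1 < s := lt_sub_iff_add_lt.mp (WithTop.coe_lt_coe.mp ht)
  rw [coeff_D, hf (t + 1) (WithTop.coe_lt_coe.mpr ht'), mul_zero]

theorem D_mem_supportedIn {S : AddSubgroup ℚ} (hS : (1 : ℚ) ∈ S) {f : Khat}
    (hf : f ∈ supportedIn ℂ S.toAddSubmonoid) : D f ∈ supportedIn ℂ S.toAddSubmonoid := by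
  intro t ht
  have ht1 : t + 1 ∈ S := hf (right_ne_zero_of_mul (ht : (D f).coeff t ≠ 0))
  simpa using S.sub_mem ht1 hS

theorem support_ofPS_subset (F : PowerSeries ℂ) :
    (ofPS F).support ⊆ Set.range ((↑) : ℕ → ℚ) :=
  support_embDomain_subset.trans (Set.image_subset_range _ _)

theorem coeff_ofPS_natCast (F : PowerSeries ℂ) (n : ℕ) :
    (ofPS F).coeff n = PowerSeries.coeff n F :=
  ofPowerSeries_apply_coeff F n

theorem one_le_orderTop_ofPS {F : PowerSeries ℂ} (hF0 : PowerSeries.coeff 0 F = 0) :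
    1 ≤ (ofPS F).orderTop := by
  rw [le_orderTop_iff_forall]
  intro j hj
  by_contra hne
  obtain ⟨n, rfl⟩ := support_ofPS_subset F hne
  obtain rfl : n = 0 := by exact_mod_cast Nat.lt_one_iff.mp (by exact_mod_cast hj)
  exact hne (by rw [coeff_ofPS_natCast, hF0])

theorem ofPS_mem_supportedIn {S : AddSubgroup ℚ} (hS : (1 : ℚ) ∈ S) (F : PowerSeries ℂ) :
    ofPS F ∈ supportedIn ℂ S.toAddSubmonoid := by
  intro t ht
  obtain ⟨n, rfl⟩ := support_ofPS_subset F ht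
  simpa using S.nsmul_mem hS n

noncomputable def defect (G : PowerSeries ℂ) (q : ℚ) (h : Khat) : Khat :=
  (q : ℂ) • hcomp G h - D h * ofPS G

section Defect

variable {G : PowerSeries ℂ} (hG0 : PowerSeries.coeff 0 G = 0) {q : ℚ}
include hG0

theorem defect_zero : defect G q 0 = 0 := by
  rw [defect, hcomp_zero hG0, D_zero, smul_zero, zero_mul, sub_zero]

theorem coeff_defect_sub_defect (hq : 0 < q) {h₁ h₂ : Khat} (h₁q : q ≤ h₁.orderTop)
    (h₂q : q ≤ h₂.orderTop) {s : ℚ} (hs : s ≤ (h₁ - h₂).orderTop) :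
    (defect G q h₁ - defect G q h₂).coeff s =
      (q - s) * PowerSeries.coeff 1 G * (h₁ - h₂).coeff s := by
  have hcomp_part :
      (hcomp G h₁ - hcomp G h₂).coeff s = PowerSeries.coeff 1 G * (h₁ - h₂).coeff s := by
    have hpos : ∀ {h : Khat}, q ≤ h.orderTop → 0 < h.orderTop :=
      fun hh => (WithTop.coe_lt_coe.mpr hq).trans_le hh
    rw [hcomp_eq_heval G (hpos h₁q), hcomp_eq_heval G (hpos h₂q)]
    exact PowerSeries.coeff_heval_sub_heval hq h₁q h₂q G hs
  have hD_part :
      (D (h₁ - h₂) * ofPS G).coeff s = s * (h₁ - h₂).coeff s * PowerSeries.coeff 1 G := by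
    have h := coeff_mul_of_le_orderTop (le_orderTop_D hs) (one_le_orderTop_ofPS hG0)
    rwa [sub_add_cancel, coeff_D, sub_add_cancel, show ((1 : ℚ)) = ((1 : ℕ) : ℚ) by simp,
      coeff_ofPS_natCast] at h
  have hsplit : defect G q h₁ - defect G q h₂ =
      (q : ℂ) • (hcomp G h₁ - hcomp G h₂) - D (h₁ - h₂) * ofPS G := by
    rw [defect, defect, D_sub, smul_sub, sub_mul]
    abel
  rw [hsplit, coeff_sub, coeff_smul, smul_eq_mul, hcomp_part, hD_part]
  ring

theorem coeff_defect_eq_zero_of_le (hq : 0 < q) {h : Khat} (hh : q ≤ h.orderTop) {s : ℚ}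
    (hs : s ≤ q) : (defect G q h).coeff s = 0 := by
  have key := coeff_defect_sub_defect hG0 hq hh (h₂ := 0) (by simp)
    (by simpa using (WithTop.coe_le_coe.mpr hs).trans hh)
  rw [defect_zero hG0, sub_zero, sub_zero] at key
  rw [key]
  rcases hs.lt_or_eq with hs | rfl
  · rw [coeff_eq_zero_of_lt_orderTop ((WithTop.coe_lt_coe.mpr hs).trans_le hh), mul_zero]
  · rw [sub_self, zero_mul, zero_mul]

theorem eq_of_defect_eq_zero (hG1 : PowerSeries.coeff 1 G ≠ 0) (hq : 0 < q) {h₁ h₂ : Khat}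
    (h₁q : h₁.orderTop = q) (h₂q : h₂.orderTop = q) (hc : h₁.leadingCoeff = h₂.leadingCoeff)
    (hd₁ : defect G q h₁ = 0) (hd₂ : defect G q h₂ = 0) : h₁ = h₂ := by
  by_contra hne
  have hδ : h₁ - h₂ ≠ 0 := sub_ne_zero.mpr hne
  have hs : ((h₁ - h₂).order : WithTop ℚ) = (h₁ - h₂).orderTop :=
    order_eq_orderTop_of_ne_zero hδ
  have hqs : q < (h₁ - h₂).order :=
    WithTop.coe_lt_coe.mp ((le_orderTop_of_leadingCoeff_eq h₁q h₂q hc).trans_eq hs.symm)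
  have key := coeff_defect_sub_defect hG0 hq h₁q.ge h₂q.ge hs.le
  rw [hd₁, hd₂, sub_zero, coeff_zero] at key
  refine mul_ne_zero (mul_ne_zero ?_ hG1) (coeff_order_eq_zero.not.mpr hδ) key.symm
  exact sub_ne_zero.mpr (by exact_mod_cast hqs.ne)

end Defect

theorem defect_mem_supportedIn (G : PowerSeries ℂ) (q : ℚ) {S : AddSubgroup ℚ}
    (hS : (1 : ℚ) ∈ S) {h : Khat} (hpos : 0 < h.orderTop)
    (hh : h ∈ supportedIn ℂ S.toAddSubmonoid) :
    defect G q h ∈ supportedIn ℂ S.toAddSubmonoid := by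
  rw [defect, hcomp_eq_heval G hpos]
  exact Subring.sub_mem _
    ((support_smul_subset _ _).trans (PowerSeries.heval_mem_supportedIn hh G))
    (Subring.mul_mem _ (D_mem_supportedIn hS hh) (ofPS_mem_supportedIn hS G))

theorem isPuiseux_of_mem_supportedIn {d : ℕ} (hd : 0 < d) {f : Khat}
    (hf : f ∈ supportedIn ℂ (AddSubgroup.zmultiples (d : ℚ)⁻¹).toAddSubmonoid) :
    IsPuiseux f := by
  refine ⟨d, hd, fun t ht => ?_⟩
  obtain ⟨n, rfl⟩ := AddSubgroup.mem_zmultiples_iff.mp (hf ht)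
  exact ⟨n, by rw [zsmul_eq_mul, div_eq_mul_inv]⟩

section Construction

variable (q : ℚ)

def latticePoint : ℕ ↪o ℚ :=
  OrderEmbedding.ofStrictMono (fun k => q + k / q.den) fun _ _ h => by
    have : (0 : ℚ) < q.den := by exact_mod_cast q.den_pos
    dsimp only
    gcongr

theorem latticePoint_apply (k : ℕ) : latticePoint q k = q + k / q.den := rfl

theorem latticePoint_zero : latticePoint q 0 = q := by simp [latticePoint_apply]

noncomputable def ofLatticeCoeffs (a : ℕ → ℂ) : Khat :=
  embDomain (latticePoint q) ⟨a, Set.IsPWO.of_linearOrder _⟩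

variable {q}

theorem coeff_ofLatticeCoeffs_latticePoint (a : ℕ → ℂ) (k : ℕ) :
    (ofLatticeCoeffs q a).coeff (latticePoint q k) = a k :=
  embDomain_coeff

theorem coeff_ofLatticeCoeffs_of_notMem_range (a : ℕ → ℂ) {t : ℚ}
    (ht : t ∉ Set.range (latticePoint q)) : (ofLatticeCoeffs q a).coeff t = 0 :=
  embDomain_of_notMem_range ht

theorem latticePoint_le_orderTop_ofLatticeCoeffs_sub {a b : ℕ → ℂ} {k : ℕ}
    (hab : ∀ j < k, a j = b j) :
    (latticePoint q k : WithTop ℚ) ≤ (ofLatticeCoeffs q a - ofLatticeCoeffs q b).orderTop := by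
  rw [le_orderTop_iff_forall]
  intro t ht
  rw [coeff_sub]
  by_cases hrange : t ∈ Set.range (latticePoint q)
  · obtain ⟨j, rfl⟩ := hrange
    rw [coeff_ofLatticeCoeffs_latticePoint, coeff_ofLatticeCoeffs_latticePoint,
      hab j ((latticePoint q).lt_iff_lt.mp (WithTop.coe_lt_coe.mp ht)), sub_self]
  · rw [coeff_ofLatticeCoeffs_of_notMem_range a hrange,
      coeff_ofLatticeCoeffs_of_notMem_range b hrange, sub_self]

theorem le_orderTop_ofLatticeCoeffs (a : ℕ → ℂ) :
    (q : WithTop ℚ) ≤ (ofLatticeCoeffs q a).orderTop := by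
  have h := latticePoint_le_orderTop_ofLatticeCoeffs_sub (q := q) (a := a) (b := 0) (k := 0)
    (by simp)
  rwa [latticePoint_zero, show ofLatticeCoeffs q 0 = 0 from embDomain_zero, sub_zero] at h

theorem ofLatticeCoeffs_mem_supportedIn (a : ℕ → ℂ) :
    ofLatticeCoeffs q a ∈
      supportedIn ℂ (AddSubgroup.zmultiples (q.den : ℚ)⁻¹).toAddSubmonoid := by
  intro t ht
  obtain ⟨k, -, rfl⟩ := support_embDomain_subset ht
  refine AddSubgroup.mem_zmultiples_iff.mpr ⟨q.num + k, ?_⟩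
  rw [latticePoint_apply, zsmul_eq_mul]
  field_simp
  push_cast
  rw [mul_comm, Rat.mul_den_eq_num]

theorem mem_range_latticePoint {t : ℚ} (ht : t ∈ AddSubgroup.zmultiples (q.den : ℚ)⁻¹)
    (hqt : q ≤ t) : t ∈ Set.range (latticePoint q) := by
  obtain ⟨m, rfl⟩ := AddSubgroup.mem_zmultiples_iff.mp ht
  have hnum : q.num ≤ m := by
    rw [zsmul_eq_mul, ← div_eq_mul_inv, le_div_iff₀ (by positivity), Rat.mul_den_eq_num] at hqt
    exact_mod_cast hqt
  refine ⟨(m - q.num).toNat, ?_⟩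
  rw [latticePoint_apply, zsmul_eq_mul]
  field_simp
  rw [Rat.mul_den_eq_num, ← Int.cast_natCast, Int.toNat_of_nonneg (by omega)]
  push_cast
  ring

end Construction

section Solution

variable (G : PowerSeries ℂ) (q : ℚ) (c : ℂ)

/-- The coefficient of `x ^ (q + k / d)`, chosen by `coeff_defect_sub_defect` so that the
coefficient of the defect there vanishes once it is added to the lower terms. -/
noncomputable def solutionCoeff : ℕ → ℂ
  | k => if k = 0 then c else
      (defect G q (ofLatticeCoeffs q fun j => if j < k then solutionCoeff j else 0)).coeff
        (latticePoint q k) / ((latticePoint q k - q) * PowerSeries.coeff 1 G)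

noncomputable def solution : Khat := ofLatticeCoeffs q (solutionCoeff G q c)

variable {G q c}

theorem solutionCoeff_of_ne_zero {k : ℕ} (hk : k ≠ 0) :
    solutionCoeff G q c k =
      (defect G q (ofLatticeCoeffs q fun j => if j < k then solutionCoeff G q c j else 0)).coeff
        (latticePoint q k) / ((latticePoint q k - q) * PowerSeries.coeff 1 G) := by
  rw [solutionCoeff, if_neg hk]

theorem coeff_solution_self : (solution G q c).coeff q = c := by
  have h := coeff_ofLatticeCoeffs_latticePoint (q := q) (solutionCoeff G q c) 0
  rwa [latticePoint_zero, solutionCoeff, if_pos rfl] at h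

theorem orderTop_solution (hc : c ≠ 0) : (solution G q c).orderTop = q :=
  le_antisymm (orderTop_le_of_coeff_ne_zero (coeff_solution_self.trans_ne hc))
    (le_orderTop_ofLatticeCoeffs _)

theorem isPuiseux_solution : IsPuiseux (solution G q c) :=
  isPuiseux_of_mem_supportedIn q.den_pos (ofLatticeCoeffs_mem_supportedIn _)

theorem coeff_defect_solution_latticePoint (hG0 : PowerSeries.coeff 0 G = 0)
    (hG1 : PowerSeries.coeff 1 G ≠ 0) (hq : 0 < q) (k : ℕ) :
    (defect G q (solution G q c)).coeff (latticePoint q k) = 0 := by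
  rcases Nat.eq_zero_or_pos k with rfl | hk
  · exact coeff_defect_eq_zero_of_le hG0 hq (le_orderTop_ofLatticeCoeffs _)
      (latticePoint_zero q).le
  have key := coeff_defect_sub_defect hG0 hq (le_orderTop_ofLatticeCoeffs _)
    (le_orderTop_ofLatticeCoeffs _) (latticePoint_le_orderTop_ofLatticeCoeffs_sub
      (b := fun j => if j < k then solutionCoeff G q c j else 0) fun j hj => (if_pos hj).symm)
  rw [coeff_sub, coeff_sub, coeff_ofLatticeCoeffs_latticePoint,
    coeff_ofLatticeCoeffs_latticePoint, if_neg (lt_irrefl k), sub_zero,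
    solutionCoeff_of_ne_zero hk.ne'] at key
  have hqk : ((latticePoint q k : ℚ) : ℂ) - q ≠ 0 := by
    have hlt := (latticePoint q).lt_iff_lt.mpr hk
    rw [latticePoint_zero] at hlt
    exact sub_ne_zero.mpr (by exact_mod_cast hlt.ne')
  have hcancel : ∀ e : ℂ, ((q : ℂ) - (latticePoint q k : ℚ)) * PowerSeries.coeff 1 G *
      (e / ((((latticePoint q k : ℚ) : ℂ) - q) * PowerSeries.coeff 1 G)) = -e := fun e => by
    field_simp
    ring
  rw [hcancel] at key
  exact sub_eq_neg_self.mp key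

theorem defect_solution (hG0 : PowerSeries.coeff 0 G = 0) (hG1 : PowerSeries.coeff 1 G ≠ 0)
    (hq : 0 < q) : defect G q (solution G q c) = 0 := by
  ext t
  rw [coeff_zero]
  by_cases hrange : t ∈ Set.range (latticePoint q)
  · obtain ⟨k, rfl⟩ := hrange
    exact coeff_defect_solution_latticePoint hG0 hG1 hq k
  rcases le_or_gt t q with htq | hqt
  · exact coeff_defect_eq_zero_of_le hG0 hq (le_orderTop_ofLatticeCoeffs _) htq
  have hS : (1 : ℚ) ∈ AddSubgroup.zmultiples (q.den : ℚ)⁻¹ :=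
    AddSubgroup.mem_zmultiples_iff.mpr ⟨q.den, by simp⟩
  have hmem := defect_mem_supportedIn G q hS
    ((WithTop.coe_lt_coe.mpr hq).trans_le (le_orderTop_ofLatticeCoeffs _))
    (ofLatticeCoeffs_mem_supportedIn (solutionCoeff G q c))
  by_contra hne
  exact hrange (mem_range_latticePoint (hmem hne) hqt.le)

end Solution

/-- for `G ∈ ℂ[[x]]` with `v(G) = 1` and leading coefficient `1`, and any
`q ∈ ℚ_{>0}`, `c ≠ 0`, there is exactly one Puiseux series `h` with initial term `c·x^q`
satisfying `q·(G ∘ h) = h'·G`. -/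
theorem exists_unique_puiseux_solution (G : PowerSeries ℂ)
    (hG0 : PowerSeries.coeff 0 G = 0) (hG1 : PowerSeries.coeff 1 G = 1)
    (q : ℚ) (hq : 0 < q) (c : ℂ) (hc : c ≠ 0) :
    ∃! h : Khat, IsPuiseux h ∧ h ≠ 0 ∧ h.order = q ∧ h.leadingCoeff = c ∧
      (q : ℂ) • hcomp G h = D h * ofPS G := by
  have hG1' : PowerSeries.coeff 1 G ≠ 0 := hG1 ▸ one_ne_zero
  have horderTop : (solution G q c).orderTop = q := orderTop_solution hc
  have hne : solution G q c ≠ 0 := orderTop_ne_top.mp (by simp [horderTop])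
  have horder : (solution G q c).order = q :=
    WithTop.coe_injective ((order_eq_orderTop_of_ne_zero hne).trans horderTop)
  have hlead : (solution G q c).leadingCoeff = c := by
    rw [leadingCoeff_eq, horder, coeff_solution_self]
  refine ⟨solution G q c, ⟨isPuiseux_solution, hne, horder, hlead,
    sub_eq_zero.mp (defect_solution hG0 hG1' hq)⟩, ?_⟩
  rintro h ⟨-, hh0, hhq, hhc, hh⟩
  refine eq_of_defect_eq_zero hG0 hG1' hq ?_ horderTop (hhc.trans hlead.symm)
    (sub_eq_zero.mpr hh) (defect_solution hG0 hG1' hq)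
  rw [← order_eq_orderTop_of_ne_zero hh0, hhq]
end

section
/- Let F = ₂F₁(1/12, 5/12; 1; 1728x) = Σ_{n≥0} ((1/12)_n (5/12)_n / (n!)²)·(1728)^n x^n. Then F ∈ ℤ[[x]], i.e., every coefficient of F is an integer. -/
/-!
Since `1728 = 12³`, the coefficient equals `12ⁿ · ∏ₖ₍ₙ (12k + 1)(12k + 5) / (n!)²`. Write
`n! = 2ᵃ 3ᵇ m` with `m` prime to `6`. Modulo `m` the number `12` is invertible, so
`∏ₖ₍ₙ (12k + c) ≡ 12ⁿ ∏ₖ₍ₙ (k + c/12)`, a rising factorial of length `n`, which is divisible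
by `n!` and hence by `m`. Legendre's formula gives `a ≤ n` and `2b ≤ n`, so `2²ᵃ 3²ᵇ ∣ 12ⁿ`.
-/

open Finset Nat

lemma pow_mul_ascPochhammer_eval_div {K : Type*} [Field K] {a : K} (ha : a ≠ 0) (c : K)
    (n : ℕ) : a ^ n * (ascPochhammer K n).eval (c / a) = ∏ k ∈ range n, (a * k + c) := by
  induction n with
  | zero => simp
  | succ n ih =>
    rw [ascPochhammer_succ_eval, prod_range_succ, ← ih]
    field_simp
    ring

lemma dvd_prod_mul_add_of_coprime {N a : ℕ} (c n : ℕ) (ha : N.Coprime a) (hN : N ∣ n !) :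
    N ∣ ∏ k ∈ range n, (a * k + c) := by
  have : NeZero N := ⟨ne_zero_of_dvd_ne_zero (factorial_ne_zero n) hN⟩
  rw [← ZMod.natCast_eq_zero_iff] at hN ⊢
  set b := ((a : ZMod N)⁻¹ * c).val
  have hab : (a : ZMod N) * b = c := by
    rw [ZMod.natCast_zmod_val, ← mul_assoc, ZMod.coe_mul_inv_eq_one a ha.symm, one_mul]
  have hasc : ((b.ascFactorial n : ℕ) : ZMod N) = 0 := by
    obtain ⟨q, hq⟩ := factorial_dvd_ascFactorial b n
    rw [hq, Nat.cast_mul, hN, zero_mul]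
  calc ((∏ k ∈ range n, (a * k + c) : ℕ) : ZMod N)
      = ∏ k ∈ range n, (a : ZMod N) * (b + k) := by
        push_cast
        refine prod_congr rfl fun k _ => ?_
        rw [← hab]
        ring
    _ = a ^ n * ((b.ascFactorial n : ℕ) : ZMod N) := by
        rw [prod_mul_distrib, prod_const, card_range, ascFactorial_eq_prod_range]
        push_cast
        rfl
    _ = 0 := by rw [hasc, mul_zero]

lemma sub_one_mul_le_of_pow_dvd_factorial {p e n : ℕ} (hp : p.Prime) (h : p ^ e ∣ n !) :
    (p - 1) * e ≤ n := by
  have : Fact p.Prime := ⟨hp⟩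
  calc (p - 1) * e ≤ (p - 1) * padicValNat p n ! :=
        Nat.mul_le_mul_left _ ((padicValNat_dvd_iff_le (factorial_ne_zero n)).mp h)
    _ ≤ n := (sub_one_mul_padicValNat_factorial n).trans_le (Nat.sub_le _ _)

lemma factorial_sq_dvd_twelve_pow_mul_prod (n : ℕ) :
    n ! ^ 2 ∣ 12 ^ n * ((∏ k ∈ range n, (12 * k + 1)) * ∏ k ∈ range n, (12 * k + 5)) := by
  obtain ⟨a, n₁, h2n₁, hn₁⟩ := exists_eq_pow_mul_and_not_dvd (factorial_ne_zero n) 2 (by norm_num)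
  obtain ⟨b, m, h3m, rfl⟩ :=
    exists_eq_pow_mul_and_not_dvd (right_ne_zero_of_mul (hn₁ ▸ factorial_ne_zero n)) 3
      (by norm_num)
  have h2m : ¬ 2 ∣ m := fun h => h2n₁ (h.trans (dvd_mul_left m _))
  have hm : m.Coprime 12 := by
    rw [show 12 = 2 ^ 2 * 3 by norm_num]
    exact (Nat.Coprime.mul_left ((prime_two.coprime_iff_not_dvd.mpr h2m).pow_left 2)
      (prime_three.coprime_iff_not_dvd.mpr h3m)).symm
  have hm_dvd : m ∣ n ! := ⟨2 ^ a * 3 ^ b, by rw [hn₁]; ring⟩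
  have ha : (2 - 1) * a ≤ n := sub_one_mul_le_of_pow_dvd_factorial prime_two ⟨3 ^ b * m, hn₁⟩
  have hb : (3 - 1) * b ≤ n :=
    sub_one_mul_le_of_pow_dvd_factorial prime_three ⟨2 ^ a * m, by rw [hn₁]; ring⟩
  calc n ! ^ 2 = (2 ^ (2 * a) * 3 ^ (2 * b)) * (m * m) := by rw [hn₁]; ring
    _ ∣ (2 ^ (2 * n) * 3 ^ n) * ((∏ k ∈ range n, (12 * k + 1)) * ∏ k ∈ range n, (12 * k + 5)) :=
        mul_dvd_mul (mul_dvd_mul (pow_dvd_pow 2 (by omega)) (pow_dvd_pow 3 (by omega)))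
          (mul_dvd_mul (dvd_prod_mul_add_of_coprime 1 n hm hm_dvd)
            (dvd_prod_mul_add_of_coprime 5 n hm hm_dvd))
    _ = _ := by rw [pow_mul, ← mul_pow]; norm_num

/-- every coefficient of `₂F₁(1/12, 5/12; 1; 1728x)` is an integer:
`1728ⁿ·(1/12)ₙ·(5/12)ₙ/(n!)² ∈ ℤ` for all `n ≥ 0`. -/
theorem hypergeometric_coeffs_integral (n : ℕ) :
    ∃ m : ℤ, (1728 : ℚ) ^ n * (ascPochhammer ℚ n).eval (1 / 12) *
        (ascPochhammer ℚ n).eval (5 / 12) / ((n.factorial : ℚ)) ^ 2 = (m : ℚ) := by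
  obtain ⟨m, hm⟩ := factorial_sq_dvd_twelve_pow_mul_prod n
  refine ⟨m, ?_⟩
  rw [div_eq_iff (by positivity)]
  have h12 : (12 : ℚ) ≠ 0 := by norm_num
  calc (1728 : ℚ) ^ n * (ascPochhammer ℚ n).eval (1 / 12) * (ascPochhammer ℚ n).eval (5 / 12)
      = 12 ^ n * ((12 ^ n * (ascPochhammer ℚ n).eval (1 / 12)) *
          (12 ^ n * (ascPochhammer ℚ n).eval (5 / 12))) := by
        rw [show (1728 : ℚ) = 12 ^ 3 by norm_num, ← pow_mul]
        ring
    _ = ((12 ^ n * ((∏ k ∈ range n, (12 * k + 1)) * ∏ k ∈ range n, (12 * k + 5)) : ℕ) : ℚ) := by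
        rw [pow_mul_ascPochhammer_eval_div h12, pow_mul_ascPochhammer_eval_div h12]
        push_cast
        rfl
    _ = m * n ! ^ 2 := by
        rw [hm]
        push_cast
        ring
end

section
/- Clausen-type identity: ₂F₁(1/12, 5/12; 1; z)² = ₃F₂(1/6, 1/2, 5/6; 1, 1; z) as formal power series in z. -/
/-!
This is Clausen's formula
`₂F₁(a, b; a + b + 1/2; z)² = ₃F₂(2a, 2b, a + b; 2a + 2b, a + b + 1/2; z)` at `a = 1/12`, `b = 5/12`.
The coefficients of the ₃F₂ satisfy a first-order recurrence in `n`. Zeilberger's creative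
telescoping produces a certificate showing that the coefficients `∑_{k+m=n} A_k A_m` of the square
satisfy the same recurrence: it holds termwise up to a difference along the antidiagonal, which
telescopes over `k + m = n`.
-/

noncomputable section

/-- `₂F₁(1/12, 5/12; 1; z)` as a formal power series in `z`. -/
def F21 : PowerSeries ℚ :=
  PowerSeries.mk fun n =>
    (ascPochhammer ℚ n).eval (1 / 12) * (ascPochhammer ℚ n).eval (5 / 12) /
      ((ascPochhammer ℚ n).eval 1 * n.factorial)

/-- `₃F₂(1/6, 1/2, 5/6; 1, 1; z)` as a formal power series in `z`. -/
def F32 : PowerSeries ℚ :=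
  PowerSeries.mk fun n =>
    (ascPochhammer ℚ n).eval (1 / 6) * (ascPochhammer ℚ n).eval (1 / 2) *
        (ascPochhammer ℚ n).eval (5 / 6) /
      ((ascPochhammer ℚ n).eval 1 * (ascPochhammer ℚ n).eval 1 * n.factorial)

end

open PowerSeries Finset
open scoped Nat

theorem Finset.Nat.sum_antidiagonal_telescope {M : Type*} [AddCommGroup M] (G : ℕ → ℕ → M)
    (n : ℕ) :
    ∑ p ∈ antidiagonal n, (G (p.1 + 1) p.2 - G p.1 (p.2 + 1)) = G (n + 1) 0 - G 0 (n + 1) := by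
  induction n generalizing G with
  | zero => simp
  | succ n ih =>
    rw [Finset.Nat.sum_antidiagonal_succ, ih fun k l => G (k + 1) l]
    abel

section Hypergeometric

variable {K : Type*} [Field K]

theorem ordinaryHypergeometricCoefficient_zero (a b c : K) :
    ordinaryHypergeometricCoefficient a b c 0 = 1 := by
  simp [ordinaryHypergeometricCoefficient]

theorem ordinaryHypergeometricCoefficient_succ (a b c : K) (n : ℕ) :
    ordinaryHypergeometricCoefficient a b c (n + 1) =
      ordinaryHypergeometricCoefficient a b c n * ((a + n) * (b + n) / ((n + 1) * (c + n))) := by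
  simp only [ordinaryHypergeometricCoefficient, ascPochhammer_succ_eval, Nat.factorial_succ,
    Nat.cast_mul, Nat.cast_succ, div_eq_mul_inv, mul_inv]
  ring

noncomputable def hypergeometric3F2Coefficient (a b c d e : K) (n : ℕ) : K :=
  (n !⁻¹ : K) * (ascPochhammer K n).eval a * (ascPochhammer K n).eval b *
    (ascPochhammer K n).eval c * ((ascPochhammer K n).eval d)⁻¹ *
      ((ascPochhammer K n).eval e)⁻¹

theorem hypergeometric3F2Coefficient_zero (a b c d e : K) :
    hypergeometric3F2Coefficient a b c d e 0 = 1 := by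
  simp [hypergeometric3F2Coefficient]

theorem hypergeometric3F2Coefficient_succ (a b c d e : K) (n : ℕ) :
    hypergeometric3F2Coefficient a b c d e (n + 1) =
      hypergeometric3F2Coefficient a b c d e n *
        ((a + n) * (b + n) * (c + n) / ((n + 1) * (d + n) * (e + n))) := by
  simp only [hypergeometric3F2Coefficient, ascPochhammer_succ_eval, Nat.factorial_succ,
    Nat.cast_mul, Nat.cast_succ, div_eq_mul_inv, mul_inv]
  ring

namespace Clausen

variable [CharZero K] {a b c : K}

/-- Zeilberger's creative-telescoping certificate for the Cauchy square of the coefficients of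
`₂F₁(a, b; c)` when `c = a + b + 1/2`. -/
noncomputable def certificate (a b c : K) (k l : ℕ) : K :=
  ordinaryHypergeometricCoefficient a b c k * ordinaryHypergeometricCoefficient a b c l *
    (k * (k + c - 1) * (2 - 2 * c - k - 3 * l))

theorem term_eq_certificate_sub (hc : a + b + 1 / 2 = c) {k m n : ℕ} (hkm : k + m = n)
    (hk : c + k ≠ 0) (hm : c + m ≠ 0) :
    (n + 1) * (2 * a + 2 * b + n) * (c + n) *
        (ordinaryHypergeometricCoefficient a b c k *
          ordinaryHypergeometricCoefficient a b c (m + 1)) -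
      (2 * a + n) * (2 * b + n) * (a + b + n) *
        (ordinaryHypergeometricCoefficient a b c k * ordinaryHypergeometricCoefficient a b c m) =
      certificate a b c (k + 1) m - certificate a b c k (m + 1) := by
  subst hkm
  have hk1 : (k + 1 : K) ≠ 0 := Nat.cast_add_one_ne_zero k
  have hm1 : (m + 1 : K) ≠ 0 := Nat.cast_add_one_ne_zero m
  simp only [certificate, ordinaryHypergeometricCoefficient_succ]
  generalize ordinaryHypergeometricCoefficient a b c k = x,
    ordinaryHypergeometricCoefficient a b c m = y
  push_cast
  field_simp
  subst hc
  ring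

theorem coeff_sq_succ (hc : a + b + 1 / 2 = c) (hcn : ∀ j : ℕ, c + j ≠ 0) (n : ℕ) :
    (n + 1) * (2 * a + 2 * b + n) * (c + n) *
        coeff (n + 1) (mk (ordinaryHypergeometricCoefficient a b c) ^ 2) =
      (2 * a + n) * (2 * b + n) * (a + b + n) *
        coeff n (mk (ordinaryHypergeometricCoefficient a b c) ^ 2) := by
  have hsum := Finset.Nat.sum_antidiagonal_telescope (certificate a b c) n
  rw [← sum_congr rfl fun p hp =>
    term_eq_certificate_sub hc (mem_antidiagonal.mp hp) (hcn p.1) (hcn p.2),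
    sum_sub_distrib, ← mul_sum, ← mul_sum] at hsum
  have hlast : certificate a b c (n + 1) 0 = -((n + 1) * (2 * a + 2 * b + n) * (c + n)) *
      ordinaryHypergeometricCoefficient a b c (n + 1) := by
    simp only [certificate, ordinaryHypergeometricCoefficient_zero]
    push_cast
    linear_combination
      (2 * (n + 1) * (c + n) * ordinaryHypergeometricCoefficient a b c (n + 1)) * hc
  have hfirst : certificate a b c 0 (n + 1) = 0 := by simp [certificate]
  simp only [sq, coeff_mul, coeff_mk]
  rw [Finset.Nat.sum_antidiagonal_succ', ordinaryHypergeometricCoefficient_zero]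
  linear_combination hsum + hlast - hfirst

theorem coeff_sq (hc : a + b + 1 / 2 = c) (hd : ∀ n : ℕ, 2 * a + 2 * b + n ≠ 0) (n : ℕ) :
    coeff n (mk (ordinaryHypergeometricCoefficient a b c) ^ 2) =
      hypergeometric3F2Coefficient (2 * a) (2 * b) (a + b) (2 * a + 2 * b) c n := by
  have hcn (j : ℕ) : c + j ≠ 0 := fun hj =>
    hd (2 * j + 1) (by push_cast; linear_combination 2 * hj + 2 * hc)
  induction n with
  | zero =>
    simp [sq, coeff_mul, ordinaryHypergeometricCoefficient_zero,
      hypergeometric3F2Coefficient_zero]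
  | succ n ih =>
    have hQ : (n + 1) * (2 * a + 2 * b + n) * (c + n) ≠ 0 :=
      mul_ne_zero (mul_ne_zero (Nat.cast_add_one_ne_zero n) (hd n)) (hcn n)
    rw [hypergeometric3F2Coefficient_succ, ← ih, ← mul_div_assoc, eq_div_iff hQ]
    linear_combination coeff_sq_succ hc hcn n

end Clausen

theorem clausen_formula [CharZero K] (a b : K) (h : ∀ n : ℕ, 2 * a + 2 * b + n ≠ 0) :
    mk (ordinaryHypergeometricCoefficient a b (a + b + 1 / 2)) ^ 2 =
      mk (hypergeometric3F2Coefficient (2 * a) (2 * b) (a + b) (2 * a + 2 * b)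
        (a + b + 1 / 2)) := by
  ext n
  rw [coeff_mk]
  exact Clausen.coeff_sq rfl h n

end Hypergeometric

/-- Clausen-type identity `₂F₁(1/12,5/12;1;z)² = ₃F₂(1/6,1/2,5/6;1,1;z)`. -/
theorem clausen_identity : F21 ^ 2 = F32 := by
  have hF21 : F21 = mk (ordinaryHypergeometricCoefficient (1 / 12) (5 / 12) 1) := by
    ext n
    simp only [F21, one_div, ascPochhammer_eval_one, coeff_mk, ordinaryHypergeometricCoefficient]
    ring
  have hF32 : F32 = mk (hypergeometric3F2Coefficient (1 / 6) (5 / 6) (1 / 2) 1 1) := by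
    ext n
    simp only [F32, one_div, ascPochhammer_eval_one, coeff_mk, hypergeometric3F2Coefficient]
    ring
  have h := clausen_formula (1 / 12 : ℚ) (5 / 12) fun n => by positivity
  norm_num at h
  rw [hF21, hF32, h]
end
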